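/- (The IEM of a Gaussian prior is the Mahalanobis distance.) Let μ ∈ ℝ^d, let Σ be a symmetric positive-definite d×d real matrix, and let p be the Gaussian density N(μ, Σ). Then for all x₁, x₂ ∈ ℝ^d, ∫₀^∞ E_{w ~ N(0, γI)}[‖∇ log q_γ(γx₁ + w) − ∇ log q_γ(γx₂ + w)‖²] dγ = (x₁ − x₂)ᵀ Σ^{−1} (x₁ − x₂); that is, IEM_p(x₁, x₂, ∞) equals the Mahalanobis distance √((x₁ − x₂)ᵀ Σ^{−1} (x₁ − x₂)). -/

import Mathlib

open MeasureTheory Real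
open scoped ENNReal

noncomputable def gaussDensity (d : ℕ) (γ : ℝ) (w : EuclideanSpace ℝ (Fin d)) : ℝ :=
  (2 * Real.pi * γ) ^ (-(d : ℝ) / 2) * Real.exp (-‖w‖ ^ 2 / (2 * γ))

noncomputable def smoothedDensity (d : ℕ) (p : EuclideanSpace ℝ (Fin d) → ℝ) (γ : ℝ)
    (y : EuclideanSpace ℝ (Fin d)) : ℝ :=
  ∫ x, p x * gaussDensity d γ (y - γ • x)

noncomputable def scoreFn (d : ℕ) (p : EuclideanSpace ℝ (Fin d) → ℝ) (γ : ℝ)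
    (y : EuclideanSpace ℝ (Fin d)) : EuclideanSpace ℝ (Fin d) :=
  gradient (fun z => Real.log (smoothedDensity d p γ z)) y

/-- Squared IEM with `Γ = ∞` (SNR integral over `(0, ∞)`). -/
noncomputable def IEMsqInf (d : ℕ) (p : EuclideanSpace ℝ (Fin d) → ℝ)
    (x₁ x₂ : EuclideanSpace ℝ (Fin d)) : ℝ≥0∞ :=
  ∫⁻ γ in Set.Ioi (0 : ℝ),
    ∫⁻ w, ENNReal.ofReal
      (‖scoreFn d p γ (γ • x₁ + w) - scoreFn d p γ (γ • x₂ + w)‖ ^ 2 * gaussDensity d γ w)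

/-- The quadratic form `vᵀ M v` on `EuclideanSpace ℝ (Fin d)`. -/
noncomputable def quadForm (d : ℕ) (M : Matrix (Fin d) (Fin d) ℝ)
    (v : EuclideanSpace ℝ (Fin d)) : ℝ :=
  ∑ i, ∑ j, v i * M i j * v j

/-- The Gaussian density `N(μ, S)` on `ℝ^d`. -/
noncomputable def gaussianPDF (d : ℕ) (μ : EuclideanSpace ℝ (Fin d))
    (S : Matrix (Fin d) (Fin d) ℝ) (x : EuclideanSpace ℝ (Fin d)) : ℝ :=
  (2 * Real.pi) ^ (-(d : ℝ) / 2) * S.det ^ (-(1 : ℝ) / 2) *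
    Real.exp (-(quadForm d S⁻¹ (x - μ)) / 2)

/-!
In an orthonormal eigenbasis `b` of `S` (eigenvalues `λᵢ`) both `p` and the noise density factor
into one-dimensional Gaussians, so `q_γ` is the Gaussian with mean `γμ` and covariance
`γ²S + γI`. Its score is affine, and the difference of the scores at `γx₁ + w` and `γx₂ + w` is
`-(I + γS)⁻¹(x₁ - x₂)`, independent of the noise `w`. Hence the noise expectation is trivial, and
`∫₀^∞ (1 + γλ)⁻² dγ = λ⁻¹` turns `∑ᵢ ⟪bᵢ, x₁ - x₂⟫² / (1 + γλᵢ)²` into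
`∑ᵢ ⟪bᵢ, x₁ - x₂⟫² / λᵢ = (x₁ - x₂)ᵀ S⁻¹ (x₁ - x₂)`.
-/

open scoped RealInnerProductSpace Matrix

theorem Real.exp_neg_sum_div {ι : Type*} (s : Finset ι) (a : ι → ℝ) (c : ℝ) :
    exp (-(∑ i ∈ s, a i) / c) = ∏ i ∈ s, exp (-a i / c) := by
  rw [← exp_sum, ← Finset.sum_div, Finset.sum_neg_distrib]

theorem integral_exp_neg_sq_div_mul_exp_neg_sq_div {lam γ : ℝ} (hlam : 0 < lam) (hγ : 0 < γ)
    (m y : ℝ) :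
    ∫ t, exp (-(t - m) ^ 2 / (2 * lam)) * exp (-(y - γ * t) ^ 2 / (2 * γ))
      = √(2 * π * lam / (1 + γ * lam)) * exp (-(y - γ * m) ^ 2 / (2 * (γ ^ 2 * lam + γ))) := by
  have hκ : 0 < 1 + γ * lam := by positivity
  have complete_square : ∀ t, exp (-(t - m) ^ 2 / (2 * lam)) * exp (-(y - γ * t) ^ 2 / (2 * γ))
      = exp (-(y - γ * m) ^ 2 / (2 * (γ ^ 2 * lam + γ))) *
        exp (-((1 + γ * lam) / (2 * lam)) * (t - (m + lam * y) / (1 + γ * lam)) ^ 2) := by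
    intro t
    rw [← exp_add, ← exp_add]
    congr 1
    field_simp
    ring
  simp_rw [complete_square]
  rw [integral_const_mul, integral_sub_right_eq_self
    (fun s ↦ exp (-((1 + γ * lam) / (2 * lam)) * s ^ 2)), integral_gaussian, mul_comm]
  congr 2
  field_simp

theorem lintegral_Ioi_ofReal_inv_one_add_mul_sq {lam : ℝ} (hlam : 0 < lam) :
    ∫⁻ γ in Set.Ioi 0, ENNReal.ofReal ((1 + γ * lam) ^ 2)⁻¹ = ENNReal.ofReal lam⁻¹ := by
  have hderiv : ∀ x ∈ Set.Ici (0 : ℝ),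
      HasDerivAt (fun γ ↦ -(lam * (1 + γ * lam))⁻¹) ((1 + x * lam) ^ 2)⁻¹ x := fun x hx ↦ by
    have : 0 < 1 + x * lam := by have : (0 : ℝ) ≤ x := hx; positivity
    refine (((((hasDerivAt_id' x).mul_const lam).const_add 1).const_mul lam).inv
      (by positivity)).neg.congr_deriv ?_
    field_simp
  have hnonneg : ∀ x ∈ Set.Ioi (0 : ℝ), 0 ≤ ((1 + x * lam) ^ 2)⁻¹ := fun x _ ↦ by positivity
  have hlim : Filter.Tendsto (fun γ ↦ -(lam * (1 + γ * lam))⁻¹) Filter.atTop (nhds 0) := by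
    have : Filter.Tendsto (fun γ ↦ lam * (1 + γ * lam)) Filter.atTop Filter.atTop :=
      (Filter.tendsto_atTop_add_const_left _ 1
        (Filter.tendsto_id.atTop_mul_const hlam)).const_mul_atTop hlam
    simpa using this.inv_tendsto_atTop.neg
  rw [← ofReal_integral_eq_lintegral_ofReal (integrableOn_Ioi_deriv_of_nonneg' hderiv hnonneg hlim)
    (ae_restrict_of_forall_mem measurableSet_Ioi hnonneg),
    integral_Ioi_of_hasDerivAt_of_nonneg' hderiv hnonneg hlim]
  simp

theorem lintegral_Ioi_ofReal_sum_sq_div_one_add_mul_sq {ι : Type*} [Fintype ι] (c lam : ι → ℝ)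
    (hlam : ∀ i, 0 < lam i) :
    ∫⁻ γ in Set.Ioi 0, ENNReal.ofReal (∑ i, c i ^ 2 / (1 + γ * lam i) ^ 2)
      = ENNReal.ofReal (∑ i, c i ^ 2 / lam i) := by
  have hsplit : ∀ γ, ENNReal.ofReal (∑ i, c i ^ 2 / (1 + γ * lam i) ^ 2)
      = ∑ i, ENNReal.ofReal (c i ^ 2) * ENNReal.ofReal ((1 + γ * lam i) ^ 2)⁻¹ := fun γ ↦ by
    rw [ENNReal.ofReal_sum_of_nonneg fun i _ ↦ by positivity]
    simp_rw [div_eq_mul_inv, ENNReal.ofReal_mul (sq_nonneg _)]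
  simp_rw [hsplit]
  rw [lintegral_finsetSum _ fun i _ ↦ (by fun_prop : Measurable fun γ : ℝ ↦
    ENNReal.ofReal (c i ^ 2) * ENNReal.ofReal ((1 + γ * lam i) ^ 2)⁻¹)]
  simp_rw [lintegral_const_mul' _ _ ENNReal.ofReal_ne_top,
    lintegral_Ioi_ofReal_inv_one_add_mul_sq (hlam _), ← ENNReal.ofReal_mul (sq_nonneg _),
    ← div_eq_mul_inv]
  rw [ENNReal.ofReal_sum_of_nonneg fun i _ ↦ div_nonneg (sq_nonneg _) (hlam i).le]

theorem EuclideanSpace.integral_prod_apply {ι : Type*} [Fintype ι] (f : ι → ℝ → ℝ) :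
    ∫ x : EuclideanSpace ℝ ι, ∏ i, f i (x i) = ∏ i, ∫ t, f i t := by
  rw [← integral_fintype_prod_volume_eq_prod f]
  exact (EuclideanSpace.volume_preserving_symm_measurableEquiv_toLp ι).integral_comp'
    (fun u ↦ ∏ i, f i (u i))

theorem integral_gaussDensity (d : ℕ) {γ : ℝ} (hγ : 0 < γ) :
    ∫ w, gaussDensity d γ w = 1 := by
  have h2πγ : 0 < 2 * π * γ := by positivity
  have hexp : ∀ w : EuclideanSpace ℝ (Fin d),
      exp (-‖w‖ ^ 2 / (2 * γ)) = exp (-(2 * γ)⁻¹ * ‖w‖ ^ 2) := fun w ↦ by ring_nf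
  simp only [gaussDensity, hexp, integral_const_mul]
  rw [GaussianFourier.integral_rexp_neg_mul_sq_norm (by positivity), finrank_euclideanSpace_fin,
    div_inv_eq_mul, show π * (2 * γ) = 2 * π * γ by ring, ← rpow_add h2πγ, neg_div, neg_add_cancel,
    rpow_zero]

theorem lintegral_ofReal_gaussDensity (d : ℕ) {γ : ℝ} (hγ : 0 < γ) :
    ∫⁻ w, ENNReal.ofReal (gaussDensity d γ w) = 1 := by
  have hint := integral_gaussDensity d hγ
  rw [← ofReal_integral_eq_lintegral_ofReal (Integrable.of_integral_ne_zero (by simp [hint]))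
    (Filter.Eventually.of_forall fun w ↦ by unfold gaussDensity; positivity), hint,
    ENNReal.ofReal_one]

theorem gaussDensity_eq_prod_inner {d : ℕ}
    (b : OrthonormalBasis (Fin d) ℝ (EuclideanSpace ℝ (Fin d))) (γ : ℝ)
    (w : EuclideanSpace ℝ (Fin d)) :
    gaussDensity d γ w = (2 * π * γ) ^ (-(d : ℝ) / 2) * ∏ i, exp (-⟪b i, w⟫ ^ 2 / (2 * γ)) := by
  rw [gaussDensity, ← b.sum_sq_inner_right, exp_neg_sum_div]

theorem hasGradientAt_sum_inner_sub_sq_div {ι E : Type*} [Fintype ι] [NormedAddCommGroup E]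
    [InnerProductSpace ℝ E] [CompleteSpace E] (v : ι → E) (a M : ι → ℝ) (z : E) :
    HasGradientAt (fun w ↦ ∑ i, (⟪v i, w⟫ - a i) ^ 2 / (2 * M i))
      (∑ i, ((⟪v i, z⟫ - a i) / M i) • v i) z := by
  have hterm (i : ι) := HasFDerivAt.mul_const
    ((((innerSL ℝ (v i)).hasFDerivAt (x := z)).sub_const (a i)).pow 2) (2 * M i)⁻¹
  rw [hasGradientAt_iff_hasFDerivAt]
  simp_rw [div_eq_mul_inv]
  refine (HasFDerivAt.fun_sum (u := Finset.univ) fun i _ ↦ hterm i).congr_fderiv ?_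
  ext h
  simp only [_root_.sum_apply, _root_.smul_apply,
    InnerProductSpace.toDual_apply_apply, sum_inner, inner_smul_left, innerSL_apply_apply]
  refine Finset.sum_congr rfl fun i _ ↦ ?_
  simp only [smul_eq_mul, nsmul_eq_mul, conj_trivial, Nat.cast_ofNat]
  ring

theorem quadForm_eq_dotProduct_mulVec (d : ℕ) (M : Matrix (Fin d) (Fin d) ℝ)
    (z : EuclideanSpace ℝ (Fin d)) : quadForm d M z = z.ofLp ⬝ᵥ (M *ᵥ z.ofLp) := by
  simp [quadForm, dotProduct, Matrix.mulVec, Finset.mul_sum, mul_assoc]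

theorem Matrix.PosDef.inv_mulVec_eigenvectorBasis {n : Type*} [Fintype n] [DecidableEq n]
    {S : Matrix n n ℝ} (hS : S.PosDef) (i : n) :
    S⁻¹ *ᵥ (hS.1.eigenvectorBasis i).ofLp
      = (hS.1.eigenvalues i)⁻¹ • (hS.1.eigenvectorBasis i).ofLp := by
  set v := (hS.1.eigenvectorBasis i).ofLp
  set lam := hS.1.eigenvalues i
  have hlam : lam ≠ 0 := (hS.eigenvalues_pos i).ne'
  calc S⁻¹ *ᵥ v = lam⁻¹ • S⁻¹ *ᵥ (lam • v) := by rw [mulVec_smul, inv_smul_smul₀ hlam]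
    _ = lam⁻¹ • S⁻¹ *ᵥ (S *ᵥ v) := by rw [hS.1.mulVec_eigenvectorBasis]
    _ = lam⁻¹ • v := by
      rw [mulVec_mulVec, nonsing_inv_mul _ (isUnit_iff_ne_zero.mpr hS.det_pos.ne'), one_mulVec]

namespace Matrix.PosDef

variable {d : ℕ} {S : Matrix (Fin d) (Fin d) ℝ} (hS : S.PosDef)

theorem quadForm_inv_eq_sum (z : EuclideanSpace ℝ (Fin d)) :
    quadForm d S⁻¹ z = ∑ i, ⟪hS.1.eigenvectorBasis i, z⟫ ^ 2 / hS.1.eigenvalues i := by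
  set b := hS.1.eigenvectorBasis
  have hmulVec : S⁻¹ *ᵥ z.ofLp = ∑ i, (⟪b i, z⟫ / hS.1.eigenvalues i) • (b i).ofLp := by
    conv_lhs => rw [← b.sum_repr' z]
    simp [Matrix.mulVec_sum, Matrix.mulVec_smul, hS.inv_mulVec_eigenvectorBasis, smul_smul,
      div_eq_mul_inv, b]
  rw [quadForm_eq_dotProduct_mulVec, hmulVec, dotProduct_sum]
  refine Finset.sum_congr rfl fun i _ ↦ ?_
  have hinner : z.ofLp ⬝ᵥ (b i).ofLp = ⟪b i, z⟫ := by
    rw [EuclideanSpace.inner_eq_star_dotProduct, star_trivial]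
  rw [dotProduct_smul, smul_eq_mul, hinner]
  ring

theorem quadForm_inv_nonneg (hS : S.PosDef) (z : EuclideanSpace ℝ (Fin d)) :
    0 ≤ quadForm d S⁻¹ z := by
  rw [hS.quadForm_inv_eq_sum]
  exact Finset.sum_nonneg fun i _ ↦ div_nonneg (sq_nonneg _) (hS.eigenvalues_pos i).le

theorem gaussianPDF_eq_prod (μ x : EuclideanSpace ℝ (Fin d)) :
    gaussianPDF d μ S x = (2 * π) ^ (-(d : ℝ) / 2) * S.det ^ (-(1 : ℝ) / 2) *
      ∏ i, exp (-(⟪hS.1.eigenvectorBasis i, x⟫ - ⟪hS.1.eigenvectorBasis i, μ⟫) ^ 2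
        / (2 * hS.1.eigenvalues i)) := by
  rw [gaussianPDF, hS.quadForm_inv_eq_sum, exp_neg_sum_div]
  refine congrArg _ (Finset.prod_congr rfl fun i _ ↦ ?_)
  rw [inner_sub_right]
  ring_nf

theorem smoothedDensity_gaussianPDF (μ : EuclideanSpace ℝ (Fin d)) {γ : ℝ} (hγ : 0 < γ) :
    ∃ C > 0, ∀ y, smoothedDensity d (gaussianPDF d μ S) γ y
      = C * exp (-∑ i, (⟪hS.1.eigenvectorBasis i, y⟫ - γ * ⟪hS.1.eigenvectorBasis i, μ⟫) ^ 2
          / (2 * (γ ^ 2 * hS.1.eigenvalues i + γ))) := by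
  set b := hS.1.eigenvectorBasis
  set lam := hS.1.eigenvalues
  have hlam : ∀ i, 0 < lam i := hS.eigenvalues_pos
  set K := (2 * π) ^ (-(d : ℝ) / 2) * S.det ^ (-(1 : ℝ) / 2) * (2 * π * γ) ^ (-(d : ℝ) / 2)
  have hK : 0 < K := by have := hS.det_pos; positivity
  refine ⟨K * ∏ i, √(2 * π * lam i / (1 + γ * lam i)),
    mul_pos hK (Finset.prod_pos fun i _ ↦ by have := hlam i; positivity), fun y ↦ ?_⟩
  let f (i : Fin d) (t : ℝ) : ℝ :=
    exp (-(t - ⟪b i, μ⟫) ^ 2 / (2 * lam i)) * exp (-(⟪b i, y⟫ - γ * t) ^ 2 / (2 * γ))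
  have hintegrand : ∀ x, gaussianPDF d μ S x * gaussDensity d γ (y - γ • x)
      = K * ∏ i, f i (b.repr x i) := fun x ↦ by
    simp only [hS.gaussianPDF_eq_prod, gaussDensity_eq_prod_inner b, f, inner_sub_right,
      inner_smul_right, b.repr_apply_apply, Finset.prod_mul_distrib, K]
    ring
  calc smoothedDensity d (gaussianPDF d μ S) γ y
      = ∫ x, K * ∏ i, f i (b.repr x i) := by
        rw [smoothedDensity]
        exact integral_congr_ae (.of_forall hintegrand)
    _ = ∫ u : EuclideanSpace ℝ (Fin d), K * ∏ i, f i (u i) :=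
        b.measurePreserving_measurableEquiv.integral_comp' (fun u ↦ K * ∏ i, f i (u i))
    _ = K * ∏ i, (√(2 * π * lam i / (1 + γ * lam i)) *
          exp (-(⟪b i, y⟫ - γ * ⟪b i, μ⟫) ^ 2 / (2 * (γ ^ 2 * lam i + γ)))) := by
        rw [integral_const_mul, EuclideanSpace.integral_prod_apply]
        simp only [f, integral_exp_neg_sq_div_mul_exp_neg_sq_div (hlam _) hγ]
    _ = _ := by
        rw [Finset.prod_mul_distrib, ← mul_assoc, ← exp_sum, ← Finset.sum_neg_distrib]
        simp_rw [neg_div]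

theorem scoreFn_gaussianPDF (μ : EuclideanSpace ℝ (Fin d)) {γ : ℝ} (hγ : 0 < γ)
    (z : EuclideanSpace ℝ (Fin d)) :
    scoreFn d (gaussianPDF d μ S) γ z
      = -∑ i, ((⟪hS.1.eigenvectorBasis i, z⟫ - γ * ⟪hS.1.eigenvectorBasis i, μ⟫)
          / (γ ^ 2 * hS.1.eigenvalues i + γ)) • hS.1.eigenvectorBasis i := by
  set b := hS.1.eigenvectorBasis
  set a := fun i ↦ γ * ⟪b i, μ⟫
  set M := fun i ↦ γ ^ 2 * hS.1.eigenvalues i + γ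
  obtain ⟨C, hC, hq⟩ := hS.smoothedDensity_gaussianPDF μ hγ
  have hlog : (fun y ↦ log (smoothedDensity d (gaussianPDF d μ S) γ y))
      = fun y ↦ log C - ∑ i, (⟪b i, y⟫ - a i) ^ 2 / (2 * M i) := funext fun y ↦ by
    rw [hq, log_mul hC.ne' (exp_pos _).ne', log_exp, sub_eq_add_neg]
  have hquad := hasGradientAt_sum_inner_sub_sq_div b a M z
  rw [hasGradientAt_iff_hasFDerivAt] at hquad
  rw [scoreFn, hlog]
  refine HasGradientAt.gradient ?_
  rw [hasGradientAt_iff_hasFDerivAt, map_neg]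
  exact hquad.const_sub _

theorem norm_scoreFn_gaussianPDF_sub_sq (μ : EuclideanSpace ℝ (Fin d)) {γ : ℝ} (hγ : 0 < γ)
    (x₁ x₂ w : EuclideanSpace ℝ (Fin d)) :
    ‖scoreFn d (gaussianPDF d μ S) γ (γ • x₁ + w)
        - scoreFn d (gaussianPDF d μ S) γ (γ • x₂ + w)‖ ^ 2
      = ∑ i, ⟪hS.1.eigenvectorBasis i, x₁ - x₂⟫ ^ 2 / (1 + γ * hS.1.eigenvalues i) ^ 2 := by
  rw [hS.scoreFn_gaussianPDF μ hγ, hS.scoreFn_gaussianPDF μ hγ, neg_sub_neg,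
    ← Finset.sum_sub_distrib]
  set b := hS.1.eigenvectorBasis
  set lam := hS.1.eigenvalues
  have hcoeff : ∀ i, (⟪b i, γ • x₂ + w⟫ - γ * ⟪b i, μ⟫) / (γ ^ 2 * lam i + γ)
      - (⟪b i, γ • x₁ + w⟫ - γ * ⟪b i, μ⟫) / (γ ^ 2 * lam i + γ)
      = -⟪b i, x₁ - x₂⟫ / (1 + γ * lam i) := fun i ↦ by
    have : 0 < lam i := hS.eigenvalues_pos i
    simp only [inner_add_right, inner_smul_right, inner_sub_right]
    field_simp
    ring
  simp_rw [← sub_smul, hcoeff, ← b.sum_sq_inner_right, b.orthonormal.inner_right_fintype, div_pow,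
    neg_sq]

theorem lintegral_norm_scoreFn_gaussianPDF_sub_sq_mul_gaussDensity (μ : EuclideanSpace ℝ (Fin d))
    {γ : ℝ} (hγ : 0 < γ) (x₁ x₂ : EuclideanSpace ℝ (Fin d)) :
    ∫⁻ w, ENNReal.ofReal (‖scoreFn d (gaussianPDF d μ S) γ (γ • x₁ + w)
        - scoreFn d (gaussianPDF d μ S) γ (γ • x₂ + w)‖ ^ 2 * gaussDensity d γ w)
      = ENNReal.ofReal
          (∑ i, ⟪hS.1.eigenvectorBasis i, x₁ - x₂⟫ ^ 2 / (1 + γ * hS.1.eigenvalues i) ^ 2) := by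
  have hnonneg :
      0 ≤ ∑ i, ⟪hS.1.eigenvectorBasis i, x₁ - x₂⟫ ^ 2 / (1 + γ * hS.1.eigenvalues i) ^ 2 := by
    positivity
  simp_rw [hS.norm_scoreFn_gaussianPDF_sub_sq μ hγ, ENNReal.ofReal_mul hnonneg]
  rw [lintegral_const_mul' _ _ ENNReal.ofReal_ne_top, lintegral_ofReal_gaussDensity d hγ, mul_one]

end Matrix.PosDef

/-- **the IEM of a Gaussian prior is the Mahalanobis distance.**
If `p = N(μ, Σ)` with `Σ` symmetric positive definite, then for all `x₁, x₂`,
`∫₀^∞ E_w[‖∇log q_γ(γx₁+w) − ∇log q_γ(γx₂+w)‖²] dγ = (x₁−x₂)ᵀ Σ⁻¹ (x₁−x₂)`;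
in particular `IEM_p(x₁, x₂, ∞) = √((x₁−x₂)ᵀ Σ⁻¹ (x₁−x₂))`. -/
theorem gaussian_IEM_eq_mahalanobis (d : ℕ) (μ : EuclideanSpace ℝ (Fin d))
    (S : Matrix (Fin d) (Fin d) ℝ) (hS : S.PosDef) :
    ∀ x₁ x₂ : EuclideanSpace ℝ (Fin d),
      IEMsqInf d (gaussianPDF d μ S) x₁ x₂
        = ENNReal.ofReal (quadForm d S⁻¹ (x₁ - x₂)) ∧
      Real.sqrt (IEMsqInf d (gaussianPDF d μ S) x₁ x₂).toReal
        = Real.sqrt (quadForm d S⁻¹ (x₁ - x₂)) := by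
  intro x₁ x₂
  have hIEM : IEMsqInf d (gaussianPDF d μ S) x₁ x₂ = ENNReal.ofReal (quadForm d S⁻¹ (x₁ - x₂)) := by
    rw [IEMsqInf, setLIntegral_congr_fun measurableSet_Ioi fun γ hγ ↦
        hS.lintegral_norm_scoreFn_gaussianPDF_sub_sq_mul_gaussDensity μ hγ x₁ x₂,
      lintegral_Ioi_ofReal_sum_sq_div_one_add_mul_sq _ _ hS.eigenvalues_pos, hS.quadForm_inv_eq_sum]
  exact ⟨hIEM, by rw [hIEM, ENNReal.toReal_ofReal (hS.quadForm_inv_nonneg _)]⟩
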